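/- For every fixed v ∈ ∏_{k≤n₊}(−π,0) × ∏_{k>n₊}(0,π), the function ℝⁿ → ℝ given by h ↦ Re S(h + iv) is strictly concave on ℝⁿ. -/

import Mathlib

open Matrix Real

/-- The dilogarithm `Li₂(z) = -∫₀¹ Log(1 - z t) / t dt`. -/
noncomputable def Li2 (z : ℂ) : ℂ :=
  -∫ t in (0:ℝ)..(1:ℝ), Complex.log (1 - z * (t : ℂ)) / (t : ℂ)

/-- The sign `ε_k`: `1` for the first `nP` indices, `-1` for the rest. -/
def epsR (nP n : ℕ) (k : Fin n) : ℝ := if (k : ℕ) < nP then 1 else -1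

/-- The potential function
`S(y) = i yᵀQy + Σ (-ε_k) y_k w_k + i Σ_{k ≤ n₊} Li₂(-e^{y_k}) - i Σ_{k > n₊} Li₂(-e^{y_k})`. -/
noncomputable def potential (nP nN : ℕ) (Q : Matrix (Fin (nP + nN)) (Fin (nP + nN)) ℝ)
    (w : Fin (nP + nN) → ℂ) (y : Fin (nP + nN) → ℂ) : ℂ :=
  Complex.I * (y ⬝ᵥ (Q.map Complex.ofReal).mulVec y)
    + ∑ k, -(epsR nP (nP + nN) k : ℂ) * y k * w k
    + Complex.I * ∑ k ∈ Finset.univ.filter (fun k : Fin (nP + nN) => (k : ℕ) < nP),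
        Li2 (-Complex.exp (y k))
    - Complex.I * ∑ k ∈ Finset.univ.filter (fun k : Fin (nP + nN) => ¬ (k : ℕ) < nP),
        Li2 (-Complex.exp (y k))

/-!
With `y = h + i v` and `Q` real, `Im (yᵀ Q y) = hᵀ Q v + vᵀ Q h` is linear in `h`, so `Re S(h + i v)`
splits as a sum over `k` of functions of `hₖ` alone: `-εₖ Im Li₂(-e^{hₖ} e^{i vₖ})` plus an affine
term. It therefore suffices that each `t ↦ -ε Im Li₂(-e^t a)`, `a = e^{i v}`, is strictly concave.
Substituting `u = r t` gives `Li₂(-r a) = -∫₀^r Log(1 + a u) / u du`, hence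
`d/dt Im Li₂(-e^t a) = -Im Log(1 + a e^t)` and the second derivative of `-ε Im Li₂(-e^t a)` is
`ε Im a e^t / |1 + a e^t|²`. It is negative because the strips are chosen so that `ε sin v < 0`.
-/

namespace Complex

variable {a : ℂ}

lemma one_add_mul_ofReal_mem_slitPlane (ha : a.im ≠ 0) (u : ℝ) : 1 + a * u ∈ slitPlane := by
  rcases eq_or_ne u 0 with rfl | hu
  · simp
  · exact mem_slitPlane_iff.2 <| Or.inr <| by simpa using mul_ne_zero ha hu

/-- `dslope` extends `Log (1 + a u) / u` continuously by `a` at `u = 0`. -/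
lemma li2_neg_ofReal_mul (a : ℂ) (r : ℝ) :
    Li2 (-(r * a)) = -∫ u in (0 : ℝ)..r, dslope (fun u : ℝ => log (1 + a * u)) 0 u := by
  have hsubst := intervalIntegral.smul_integral_comp_mul_left (a := 0) (b := 1)
    (dslope (fun u : ℝ => log (1 + a * u)) 0) r
  rw [mul_zero, mul_one] at hsubst
  rw [Li2, ← hsubst, ← intervalIntegral.integral_smul]
  congr 1
  refine intervalIntegral.integral_congr_ae (.of_forall fun t ht => ?_)
  have ht : t ≠ 0 := (Set.uIoc_of_le (zero_le_one' ℝ) ▸ ht).1.ne'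
  rcases eq_or_ne r 0 with rfl | hr
  · simp
  rw [dslope_of_ne _ (mul_ne_zero hr ht), slope_def_module]
  simp only [sub_zero, ofReal_zero, mul_zero, add_zero, log_one, real_smul, ofReal_inv, ofReal_mul]
  field_simp [ofReal_ne_zero.2 hr]
  ring_nf

lemma continuous_dslope_log_one_add_mul (ha : a.im ≠ 0) :
    Continuous (dslope (fun u : ℝ => log (1 + a * u)) 0) := by
  have hdiff : Differentiable ℝ fun u : ℝ => log (1 + a * u) := fun u =>
    (((hasDerivAt_id u).ofReal_comp.const_mul a).const_add 1).clog_real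
      (one_add_mul_ofReal_mem_slitPlane ha u) |>.differentiableAt
  rw [← continuousOn_univ, continuousOn_dslope Filter.univ_mem]
  exact ⟨hdiff.continuous.continuousOn, hdiff 0⟩

lemma hasDerivAt_li2_neg_ofReal_mul (ha : a.im ≠ 0) {r : ℝ} (hr : r ≠ 0) :
    HasDerivAt (fun r : ℝ => Li2 (-(r * a))) (-(log (1 + a * r) / r)) r := by
  have hFTC := ((continuous_dslope_log_one_add_mul ha).integral_hasStrictDerivAt 0 r).hasDerivAt
  rw [dslope_of_ne _ hr, slope_def_module] at hFTC
  simp only [sub_zero, ofReal_zero, mul_zero, add_zero, log_one, real_smul, ofReal_inv] at hFTC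
  rw [funext (li2_neg_ofReal_mul a), div_eq_inv_mul]
  exact hFTC.neg

lemma hasDerivAt_im_li2_neg_exp_mul (ha : a.im ≠ 0) (t : ℝ) :
    HasDerivAt (fun t : ℝ => (Li2 (-(Real.exp t * a))).im)
      (-(log (1 + a * Real.exp t)).im) t := by
  have h := (hasDerivAt_li2_neg_ofReal_mul ha (Real.exp_pos t).ne').scomp t (Real.hasDerivAt_exp t)
  rw [real_smul, mul_neg, mul_div_cancel₀ _ (ofReal_ne_zero.2 (Real.exp_pos t).ne')] at h
  exact imCLM.hasFDerivAt.comp_hasDerivAt t h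

lemma im_div_one_add (z : ℂ) : (z / (1 + z)).im = z.im / normSq (1 + z) := by
  rw [div_im]
  simp only [add_re, one_re, add_im, one_im, zero_add]
  ring

lemma hasDerivAt_im_log_one_add_mul_exp (ha : a.im ≠ 0) (t : ℝ) :
    HasDerivAt (fun t : ℝ => (log (1 + a * Real.exp t)).im)
      (a.im * Real.exp t / normSq (1 + a * Real.exp t)) t := by
  have h := (((Real.hasDerivAt_exp t).ofReal_comp.const_mul a).const_add 1).clog_real
    (one_add_mul_ofReal_mem_slitPlane ha _)
  have him := imCLM.hasFDerivAt.comp_hasDerivAt t h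
  rwa [imCLM_apply, im_div_one_add, mul_im, ofReal_re, ofReal_im, mul_zero, zero_add] at him

lemma strictConcaveOn_neg_mul_im_li2_neg_exp_mul {ε : ℝ} (hε : ε * a.im < 0) :
    StrictConcaveOn ℝ Set.univ fun t : ℝ => -(ε * (Li2 (-(Real.exp t * a))).im) := by
  have ha : a.im ≠ 0 := by rintro h; simp [h] at hε
  have hderiv : deriv (fun t : ℝ => -(ε * (Li2 (-(Real.exp t * a))).im))
      = fun t => ε * (log (1 + a * Real.exp t)).im := funext fun t => by
    simpa using ((hasDerivAt_im_li2_neg_exp_mul ha t).const_mul ε).neg.deriv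
  refine StrictAnti.strictConcaveOn_univ_of_deriv ?_ (hderiv ▸ strictAnti_of_deriv_neg fun t => ?_)
  · exact continuous_iff_continuousAt.2 fun t =>
      ((hasDerivAt_im_li2_neg_exp_mul ha t).const_mul ε).neg.continuousAt
  · rw [((hasDerivAt_im_log_one_add_mul_exp ha t).const_mul ε).deriv, mul_div_assoc', ← mul_assoc]
    exact div_neg_of_neg_of_pos (mul_neg_of_neg_of_pos hε (Real.exp_pos t))
      (normSq_pos.2 (slitPlane_ne_zero (one_add_mul_ofReal_mem_slitPlane ha _)))

end Complex

lemma strictConcaveOn_pi_sum_apply {ι : Type*} [Fintype ι] {s : ι → Set ℝ} {f : ι → ℝ → ℝ}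
    (hf : ∀ i, StrictConcaveOn ℝ (s i) (f i)) :
    StrictConcaveOn ℝ (Set.univ.pi s) fun x : ι → ℝ => ∑ i, f i (x i) := by
  refine ⟨convex_pi fun i _ => (hf i).1, fun x hx y hy hxy a b ha hb hab => ?_⟩
  obtain ⟨i₀, hi₀⟩ := Function.ne_iff.1 hxy
  simp only [Pi.add_apply, Pi.smul_apply, smul_eq_mul, Finset.mul_sum, ← Finset.sum_add_distrib]
  exact Finset.sum_lt_sum
    (fun i _ => (hf i).concaveOn.2 (hx i trivial) (hy i trivial) ha.le hb.le hab)
    ⟨i₀, Finset.mem_univ _, (hf i₀).2 (hx i₀ trivial) (hy i₀ trivial) hi₀ ha hb hab⟩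

lemma concaveOn_mul_add (α β : ℝ) : ConcaveOn ℝ Set.univ fun t : ℝ => t * α + β :=
  ((LinearMap.mulRight ℝ α).concaveOn convex_univ).add (concaveOn_const β convex_univ)

lemma im_dotProduct_map_ofReal_mulVec {ι : Type*} [Fintype ι] (Q : Matrix ι ι ℝ) (h v : ι → ℝ) :
    ((fun k => (h k : ℂ) + v k * Complex.I) ⬝ᵥ Q.map Complex.ofReal *ᵥ
      fun k => (h k : ℂ) + v k * Complex.I).im = h ⬝ᵥ (Q *ᵥ v + v ᵥ* Q) := by
  simp only [dotProduct, mulVec, vecMul, map_apply, mul_add, Finset.sum_add_distrib, Finset.mul_sum,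
    Complex.im_sum, Pi.add_apply, Complex.add_im, Complex.mul_im, Complex.add_re, Complex.mul_re,
    Complex.ofReal_re, Complex.ofReal_im, Complex.I_re, Complex.I_im, mul_zero, mul_one, sub_self,
    add_zero, zero_mul, zero_add, sub_zero]
  rw [add_comm, Finset.sum_comm (f := fun i j => v i * (Q i j * h j))]
  simp only [mul_left_comm, mul_comm]

lemma epsR_mul_sin_neg {nP n : ℕ} {k : Fin n} {x : ℝ}
    (hx : if (k : ℕ) < nP then x ∈ Set.Ioo (-π) 0 else x ∈ Set.Ioo 0 π) :
    epsR nP n k * sin x < 0 := by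
  unfold epsR
  split_ifs at hx ⊢
  · simpa using sin_neg_of_neg_of_neg_pi_lt hx.2 hx.1
  · simpa using sin_pos_of_pos_of_lt_pi hx.1 hx.2

lemma re_potential_ofReal_add_mul_I (nP nN : ℕ) (Q : Matrix (Fin (nP + nN)) (Fin (nP + nN)) ℝ)
    (w : Fin (nP + nN) → ℂ) (v h : Fin (nP + nN) → ℝ) :
    (potential nP nN Q w fun k => (h k : ℂ) + v k * Complex.I).re
      = ∑ k, (-(epsR nP (nP + nN) k * (Li2 (-(Real.exp (h k) * Complex.exp (v k * Complex.I)))).im)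
          + (h k * -((Q *ᵥ v + v ᵥ* Q) k + epsR nP (nP + nN) k * (w k).re)
            + epsR nP (nP + nN) k * v k * (w k).im)) := by
  rw [potential, Complex.sub_re, Complex.add_re, Complex.add_re, Complex.I_mul_re,
    im_dotProduct_map_ofReal_mulVec]
  simp only [Complex.I_mul_re, Complex.re_sum, Complex.im_sum, Finset.sum_filter, dotProduct,
    ← Finset.sum_neg_distrib, ← Finset.sum_sub_distrib, ← Finset.sum_add_distrib]
  refine Finset.sum_congr rfl fun k _ => ?_
  simp only [Pi.add_apply, Complex.exp_add, ← Complex.ofReal_exp, Complex.neg_re, Complex.neg_im,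
    Complex.mul_re, Complex.mul_im, Complex.add_re, Complex.add_im, Complex.ofReal_re,
    Complex.ofReal_im, Complex.I_re, Complex.I_im]
  unfold epsR
  split_ifs <;> rw [Complex.zero_im] <;> ring

theorem stmt_5 (nP nN : ℕ)
    (Q : Matrix (Fin (nP + nN)) (Fin (nP + nN)) ℝ)
    (w : Fin (nP + nN) → ℂ)
    (v : Fin (nP + nN) → ℝ)
    (hv : ∀ k : Fin (nP + nN),
      if (k : ℕ) < nP then v k ∈ Set.Ioo (-π) 0 else v k ∈ Set.Ioo 0 π) :
    StrictConcaveOn ℝ (Set.univ : Set (Fin (nP + nN) → ℝ))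
      (fun h : Fin (nP + nN) → ℝ =>
        (potential nP nN Q w (fun k => (h k : ℂ) + (v k : ℂ) * Complex.I)).re) := by
  set ε := epsR nP (nP + nN)
  have hcoord : ∀ k, StrictConcaveOn ℝ Set.univ fun t : ℝ =>
      -(ε k * (Li2 (-(Real.exp t * Complex.exp (v k * Complex.I)))).im)
        + (t * -((Q *ᵥ v + v ᵥ* Q) k + ε k * (w k).re) + ε k * v k * (w k).im) := by
    intro k
    have hsign : ε k * (Complex.exp (v k * Complex.I)).im < 0 := by
      rw [Complex.exp_ofReal_mul_I_im]
      exact epsR_mul_sin_neg (hv k)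
    exact (Complex.strictConcaveOn_neg_mul_im_li2_neg_exp_mul hsign).add_concaveOn
      (concaveOn_mul_add _ _)
  simpa only [re_potential_ofReal_add_mul_I, Set.pi_univ] using strictConcaveOn_pi_sum_apply hcoord
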